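/- arXiv:1605.03449 — 9 statements merged into one kernel-verified Lean document; each statement's English description precedes it below -/
import Mathlib

section
/- Let f(X) be a polynomial with integer coefficients. Then f(X) is a permutation polynomial over a ring of modulo 2^w if and only if for every integer w ≥ 1 and every integer X, f(X + 2^{w-1}) ≡ f(X) + 2^{w-1} (mod 2^w). -/
open Polynomial

/-- `f` is a permutation polynomial over a ring of modulo `2^w`:
for every `w ≥ 0`, the induced map on `ℤ/2^wℤ` is a bijection. -/
def IsPermPoly (f : Polynomial ℤ) : Prop :=
  ∀ w : ℕ, Function.Bijective (fun x : ZMod (2 ^ w) => f.eval₂ (Int.castRingHom (ZMod (2 ^ w))) x)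

/-- `f` is a one-stroke polynomial over a ring of modulo `2^w`:
it is a permutation polynomial and, for every `w ≥ 1` and every point of `ℤ/2^wℤ`,
the orbit `{f^i(X̄) : 0 ≤ i < 2^w}` is all of `ℤ/2^wℤ`. -/
def IsOneStroke (f : Polynomial ℤ) : Prop :=
  IsPermPoly f ∧ ∀ w : ℕ, 1 ≤ w → ∀ x : ℤ, ∀ y : ZMod (2 ^ w),
    ∃ i < 2 ^ w, (((fun t => f.eval t)^[i] x : ℤ) : ZMod (2 ^ w)) = y

lemma eval_map_cast (f : Polynomial ℤ) (n : ℕ) (a : ℤ) :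
    f.eval₂ (Int.castRingHom (ZMod n)) ((a : ℤ) : ZMod n) = ((f.eval a : ℤ) : ZMod n) := by
  simpa using Polynomial.eval₂_at_apply (p := f) (Int.castRingHom (ZMod n)) a

lemma eval_modeq (f : Polynomial ℤ) {n a b : ℤ} (h : a ≡ b [ZMOD n]) :
    f.eval a ≡ f.eval b [ZMOD n] :=
  Int.modEq_iff_dvd.mpr (dvd_trans (Int.ModEq.dvd h) (Polynomial.sub_dvd_eval_sub b a f))

lemma cast_pow_fix (w : ℕ) (a b : ℤ) :
    ((a : ZMod (2 ^ w)) = (b : ZMod (2 ^ w))) ↔ a ≡ b [ZMOD (2 : ℤ) ^ w] := by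
  rw [ZMod.intCast_eq_intCast_iff]
  constructor <;> intro h <;> [skip; skip] <;> · simpa [Int.ModEq] using h

theorem stmt_1 (f : Polynomial ℤ) :
    IsPermPoly f ↔
      ∀ w : ℕ, 1 ≤ w → ∀ X : ℤ,
        f.eval (X + 2 ^ (w - 1)) ≡ f.eval X + 2 ^ (w - 1) [ZMOD 2 ^ w] := by
  constructor
  · intro hperm w hw X
    rcases Nat.lt_or_ge w 2 with h2 | h2
    · -- w = 1
      have hw1 : w = 1 := by omega
      subst hw1
      simp only [pow_zero, pow_one]
      have hinj := (hperm 1).1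
      have hne : f.eval (X + 1) % 2 ≠ f.eval X % 2 := by
        intro h
        have heq : ((f.eval (X + 1) : ℤ) : ZMod (2 ^ 1)) = ((f.eval X : ℤ) : ZMod (2 ^ 1)) := by
          rw [ZMod.intCast_eq_intCast_iff]
          simpa [Int.ModEq] using h
        rw [← eval_map_cast, ← eval_map_cast] at heq
        have := hinj heq
        rw [cast_pow_fix] at this
        simp only [Int.ModEq, pow_one] at this
        omega
      show f.eval (X + 1) % 2 = (f.eval X + 1) % 2
      omega
    · -- w ≥ 2
      obtain ⟨v, rfl⟩ : ∃ v, w = v + 2 := ⟨w - 2, by omega⟩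
      have he : v + 2 - 1 = v + 1 := by omega
      rw [he]
      set c : ℤ := 2 ^ (v + 1) with hc
      obtain ⟨k, hk⟩ := f.binomExpansion X c
      set d : ℤ := f.derivative.eval X with hd
      have hc2 : c ^ 2 = 2 ^ (v + 2) * 2 ^ v := by
        rw [hc, ← pow_mul, ← pow_add]; ring_nf
      have hodd : ¬ (2 ∣ d) := by
        intro ⟨m, hm⟩
        have heval : f.eval (X + c) ≡ f.eval X [ZMOD (2:ℤ) ^ (v + 2)] := by
          rw [Int.modEq_iff_dvd]
          refine ⟨-(m + k * 2 ^ v), ?_⟩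
          rw [hk, hm, hc2, hc]; ring
        have heq : ((f.eval (X + c) : ℤ) : ZMod (2 ^ (v + 2)))
            = ((f.eval X : ℤ) : ZMod (2 ^ (v + 2))) := by
          rw [cast_pow_fix]; exact heval
        rw [← eval_map_cast, ← eval_map_cast] at heq
        have := (hperm (v + 2)).1 heq
        rw [cast_pow_fix] at this
        have hdvd : (2:ℤ) ^ (v + 2) ∣ c := by
          have := Int.ModEq.dvd this
          simpa using this
        have h0 : (0:ℤ) < c := by positivity
        have hle := Int.le_of_dvd h0 hdvd
        have : (2:ℤ) ^ (v + 2) = c * 2 := by rw [hc, pow_succ]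
        nlinarith
      obtain ⟨m, hm⟩ : ∃ m, d = 2 * m + 1 := by
        rcases Int.even_or_odd d with ⟨m, hm⟩ | ⟨m, hm⟩
        · exact absurd ⟨m, by omega⟩ hodd
        · exact ⟨m, hm⟩
      rw [Int.modEq_iff_dvd]
      refine ⟨-(m + k * 2 ^ v), ?_⟩
      rw [hk, hm, hc2, hc]; ring
  · intro hP
    have key : ∀ w : ℕ, Function.Injective
        (fun x : ZMod (2 ^ w) => f.eval₂ (Int.castRingHom (ZMod (2 ^ w))) x) := by
      intro w
      induction w with
      | zero =>
        haveI : Subsingleton (ZMod (2 ^ 0)) := by rw [pow_zero]; infer_instance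
        intro x y _
        exact Subsingleton.elim x y
      | succ w ih =>
        intro x y hxy
        obtain ⟨a, rfl⟩ := ZMod.intCast_surjective x
        obtain ⟨b, rfl⟩ := ZMod.intCast_surjective y
        simp only [eval_map_cast] at hxy
        have h1 : f.eval a ≡ f.eval b [ZMOD (2:ℤ) ^ (w + 1)] := (cast_pow_fix _ _ _).mp hxy
        have h2 : f.eval a ≡ f.eval b [ZMOD (2:ℤ) ^ w] :=
          Int.ModEq.of_dvd (pow_dvd_pow 2 (by omega)) h1
        have hab : a ≡ b [ZMOD (2:ℤ) ^ w] := by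
          have heq : ((f.eval a : ℤ) : ZMod (2 ^ w)) = ((f.eval b : ℤ) : ZMod (2 ^ w)) :=
            (cast_pow_fix _ _ _).mpr h2
          rw [← eval_map_cast, ← eval_map_cast] at heq
          exact (cast_pow_fix _ _ _).mp (ih heq)
        obtain ⟨t, ht⟩ := (Int.modEq_iff_dvd.mp hab)
        rcases Int.even_or_odd t with ⟨s, hs⟩ | ⟨s, hs⟩
        · rw [cast_pow_fix]
          rw [Int.modEq_iff_dvd]
          refine ⟨s, ?_⟩
          rw [ht, hs, pow_succ]; ring
        · exfalso
          have hba : b ≡ a + 2 ^ w [ZMOD (2:ℤ) ^ (w + 1)] := by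
            rw [Int.modEq_iff_dvd]
            refine ⟨-s, ?_⟩
            have : b - a = 2 ^ w * t := by omega
            rw [pow_succ]
            linear_combination -this - (2:ℤ) ^ w * hs
          have h3 : f.eval b ≡ f.eval (a + 2 ^ w) [ZMOD (2:ℤ) ^ (w + 1)] := eval_modeq f hba
          have h4 := hP (w + 1) (by omega) a
          simp only [Nat.add_sub_cancel] at h4
          have h5 : f.eval a ≡ f.eval a + 2 ^ w [ZMOD (2:ℤ) ^ (w + 1)] :=
            (h1.trans h3).trans h4
          have hdvd : (2:ℤ) ^ (w + 1) ∣ 2 ^ w := by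
            have := Int.ModEq.dvd h5
            simpa using this
          have h0 : (0:ℤ) < 2 ^ w := by positivity
          have hle := Int.le_of_dvd h0 hdvd
          rw [pow_succ] at hle
          nlinarith
    intro w
    haveI : NeZero (2 ^ w) := ⟨by positivity⟩
    exact Finite.injective_iff_bijective.mp (key w)
end

section
/- Let f(X) be a permutation polynomial over a ring of modulo 2^w. Then f(X) is a one-stroke polynomial over the ring if and only if for every integer w ≥ 1 and every nonnegative integer i, f^i(0) ≡ 0 (mod 2^w) holds exactly when i ≡ 0 (mod 2^w). -/
open Polynomial Function

private abbrev phi (f : Polynomial ℤ) (n : ℕ) : ZMod n → ZMod n :=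
  fun x => f.eval₂ (Int.castRingHom (ZMod n)) x

private lemma cast_iter (f : Polynomial ℤ) (n : ℕ) (x : ℤ) (i : ℕ) :
    (((fun t => f.eval t)^[i] x : ℤ) : ZMod n) = (phi f n)^[i] (x : ZMod n) := by
  induction i with
  | zero => simp
  | succ i ih =>
    rw [Function.iterate_succ_apply', Function.iterate_succ_apply', ← ih]
    exact (Polynomial.eval₂_hom (Int.castRingHom (ZMod n)) ((fun t => f.eval t)^[i] x)).symm

-- key: if the orbit map i ↦ φ^[i] 0 restricted to Fin n is surjective then minimalPeriod = n
private lemma minper_of_surj {n : ℕ} [NeZero n] {g : ZMod n → ZMod n}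
    (hg : Function.Injective g)
    (hsurj : ∀ y : ZMod n, ∃ i < n, g^[i] 0 = y) :
    Function.minimalPeriod g 0 = n := by
  have hn : 0 < n := Nat.pos_of_ne_zero (NeZero.ne n)
  -- the map Fin n → ZMod n is surjective hence injective
  have hsurj' : Function.Surjective (fun i : Fin n => g^[(i : ℕ)] 0) := by
    intro y; obtain ⟨i, hi, h⟩ := hsurj y; exact ⟨⟨i, hi⟩, h⟩
  have hinj : Function.Injective (fun i : Fin n => g^[(i : ℕ)] 0) := by
    have hcard : Fintype.card (Fin n) = Fintype.card (ZMod n) := by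
      simp [ZMod.card]
    exact (Fintype.bijective_iff_surjective_and_card _).mpr ⟨hsurj', hcard⟩ |>.1
  -- g^[n] 0 = 0
  have hper : Function.IsPeriodicPt g n 0 := by
    obtain ⟨j, hj, hjeq⟩ := hsurj (g^[n] 0)
    have hj0 : j = 0 := by
      by_contra hj0
      have h1 : g^[j] (g^[n - j] 0) = g^[j] 0 := by
        rw [← Function.iterate_add_apply, Nat.add_sub_cancel' hj.le, hjeq]
      have h2 : g^[n - j] 0 = g^[(0 : ℕ)] 0 := by
        simpa using hg.iterate j h1
      have := hinj (a₁ := ⟨n - j, by omega⟩) (a₂ := ⟨0, hn⟩) h2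
      simp only [Fin.mk.injEq] at this
      omega
    subst hj0
    simp only [Function.iterate_zero_apply] at hjeq
    exact hjeq.symm
  have hm := Function.IsPeriodicPt.minimalPeriod_dvd hper
  rcases Nat.lt_or_ge (Function.minimalPeriod g 0) n with hlt | hge
  · exfalso
    have hpos : 0 < Function.minimalPeriod g 0 :=
      Function.IsPeriodicPt.minimalPeriod_pos hn hper
    have : g^[Function.minimalPeriod g 0] 0 = g^[(0:ℕ)] 0 := by
      simp only [Function.iterate_zero_apply]
      exact Function.iterate_minimalPeriod (f := g) (x := (0 : ZMod n))
    have := hinj (a₁ := ⟨Function.minimalPeriod g 0, hlt⟩) (a₂ := ⟨0, hn⟩) this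
    simp only [Fin.mk.injEq] at this
    omega
  · exact le_antisymm (Nat.le_of_dvd hn hm) hge

private lemma surj_of_minper {n : ℕ} [NeZero n] {g : ZMod n → ZMod n}
    (hmp : Function.minimalPeriod g 0 = n) :
    ∀ y : ZMod n, ∃ i < n, g^[i] 0 = y := by
  have hn : 0 < n := Nat.pos_of_ne_zero (NeZero.ne n)
  have hinj : Function.Injective (fun i : Fin n => g^[(i : ℕ)] 0) := by
    intro i j h
    have := Function.iterate_injOn_Iio_minimalPeriod (f := g) (x := 0)
      (by rw [hmp]; exact i.2) (by rw [hmp]; exact j.2) h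
    exact Fin.ext this
  have hsurj : Function.Surjective (fun i : Fin n => g^[(i : ℕ)] 0) := by
    have hcard : Fintype.card (Fin n) = Fintype.card (ZMod n) := by simp [ZMod.card]
    exact (Fintype.bijective_iff_injective_and_card _).mpr ⟨hinj, hcard⟩ |>.2
  intro y; obtain ⟨i, hi⟩ := hsurj y; exact ⟨i, i.2, hi⟩

theorem stmt_3 (f : Polynomial ℤ) (hf : IsPermPoly f) :
    IsOneStroke f ↔
      ∀ w : ℕ, 1 ≤ w → ∀ i : ℕ,
        ((fun t => f.eval t)^[i] 0 ≡ 0 [ZMOD 2 ^ w] ↔ (i : ℤ) ≡ 0 [ZMOD 2 ^ w]) := by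
  have hcongr : ∀ w i, ((fun t => f.eval t)^[i] 0 ≡ 0 [ZMOD 2 ^ w]
      ↔ (phi f (2 ^ w))^[i] 0 = 0) := by
    intro w i
    rw [Int.ModEq]
    constructor
    · intro h
      have : (((fun t => f.eval t)^[i] 0 : ℤ) : ZMod (2 ^ w)) = ((0 : ℤ) : ZMod (2 ^ w)) := by
        rw [ZMod.intCast_eq_intCast_iff']
        push_cast
        exact h
      rwa [cast_iter, Int.cast_zero] at this
    · intro h
      have : (((fun t => f.eval t)^[i] 0 : ℤ) : ZMod (2 ^ w)) = ((0 : ℤ) : ZMod (2 ^ w)) := by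
        rw [cast_iter, Int.cast_zero]; exact h
      rw [ZMod.intCast_eq_intCast_iff'] at this
      push_cast at this
      exact this
  have hicongr : ∀ w (i : ℕ), ((i : ℤ) ≡ 0 [ZMOD 2 ^ w] ↔ 2 ^ w ∣ i) := by
    intro w i
    rw [Int.modEq_zero_iff_dvd]
    constructor
    · intro h; exact_mod_cast h
    · intro h; exact_mod_cast h
  constructor
  · rintro ⟨-, hos⟩ w hw i
    haveI : NeZero (2 ^ w) := ⟨pow_ne_zero _ two_ne_zero⟩
    have hsurj : ∀ y : ZMod (2 ^ w), ∃ j < 2 ^ w, (phi f (2 ^ w))^[j] 0 = y := by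
      intro y
      obtain ⟨j, hj, hje⟩ := hos w hw 0 y
      refine ⟨j, hj, ?_⟩
      rw [← hje, cast_iter, Int.cast_zero]
    have hmp := minper_of_surj (g := phi f (2 ^ w)) (hf w).1 hsurj
    rw [hcongr, hicongr]
    have : Function.IsPeriodicPt (phi f (2 ^ w)) i 0 ↔ 2 ^ w ∣ i := by
      rw [Function.isPeriodicPt_iff_minimalPeriod_dvd, hmp]
    exact this
  · intro h
    refine ⟨hf, fun w hw x y => ?_⟩
    haveI : NeZero (2 ^ w) := ⟨pow_ne_zero _ two_ne_zero⟩
    have hnpos : 0 < 2 ^ w := Nat.pos_of_ne_zero (NeZero.ne _)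
    have hiff : ∀ i, ((phi f (2 ^ w))^[i] 0 = 0 ↔ 2 ^ w ∣ i) := by
      intro i
      rw [← hcongr, h w hw i, hicongr]
    have hmp : Function.minimalPeriod (phi f (2 ^ w)) 0 = 2 ^ w := by
      have key : ∀ i, (Function.minimalPeriod (phi f (2 ^ w)) 0 ∣ i ↔ 2 ^ w ∣ i) := by
        intro i
        rw [← Function.isPeriodicPt_iff_minimalPeriod_dvd]
        exact (hiff i)
      exact Nat.dvd_antisymm ((key (2 ^ w)).mpr dvd_rfl) ((key _).mp dvd_rfl)
    have hsurj := surj_of_minper hmp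
    obtain ⟨k, hk, hke⟩ := hsurj (x : ZMod (2 ^ w))
    obtain ⟨m, hm, hme⟩ := hsurj y
    refine ⟨(m + 2 ^ w - k) % 2 ^ w, Nat.mod_lt _ hnpos, ?_⟩
    rw [cast_iter, ← hke, ← Function.iterate_add_apply]
    have hmod : ((m + 2 ^ w - k) % 2 ^ w + k) % 2 ^ w = m := by
      rw [Nat.mod_add_mod, Nat.sub_add_cancel (by omega), Nat.add_mod_right,
        Nat.mod_eq_of_lt hm]
    rw [← Function.iterate_mod_minimalPeriod_eq (n := (m + 2 ^ w - k) % 2 ^ w + k), hmp, hmod, hme]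
end

section
/- Let f(X) be a permutation polynomial over a ring of modulo 2^w. Then f(X) is a one-stroke polynomial over the ring if and only if for every integer w ≥ 1, f^{2^w}(0) ≡ 0 (mod 2^w) and f^{2^{w-1}}(0) ≢ 0 (mod 2^w). -/
open Polynomial

/-!
An injective self-map of a finite set of size `n` has a single orbit exactly when the orbit of one
chosen point, say `0`, has length `n`; for `n = 2 ^ w` that length is a power of two, so it equals
`2 ^ w` iff `0` returns after `2 ^ w` steps but not after `2 ^ (w - 1)` steps. Reducing the integer
orbit of `0` under `f` modulo `2 ^ w` turns these conditions into the stated congruences.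
-/

namespace Function

variable {α : Type*} {σ : α → α} {x : α}

theorem minimalPeriod_eq_prime_pow_succ_iff {p k : ℕ} [hp : Fact p.Prime] :
    minimalPeriod σ x = p ^ (k + 1) ↔
      IsPeriodicPt σ (p ^ (k + 1)) x ∧ ¬IsPeriodicPt σ (p ^ k) x := by
  refine ⟨fun h => ⟨h ▸ isPeriodicPt_minimalPeriod σ x, fun hk => ?_⟩,
    fun h => minimalPeriod_eq_prime_pow h.2 h.1⟩
  have hdvd := hk.minimalPeriod_dvd
  rw [h, Nat.pow_dvd_pow_iff_le_right hp.out.one_lt] at hdvd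
  omega

variable [Fintype α]

theorem exists_iterate_lt_card_eq_of_minimalPeriod_eq_card
    (h : minimalPeriod σ x = Fintype.card α) (y : α) :
    ∃ i < Fintype.card α, σ^[i] x = y := by
  have hinj : Injective fun i : Fin (Fintype.card α) => σ^[i] x := fun i j hij =>
    Fin.ext (iterate_injOn_Iio_minimalPeriod (by simp [h]) (by simp [h]) hij)
  obtain ⟨i, rfl⟩ := ((Fintype.bijective_iff_injective_and_card _).2 ⟨hinj, by simp⟩).2 y
  exact ⟨i, i.2, rfl⟩

theorem minimalPeriod_eq_card_of_forall_exists_iterate (hx : x ∈ periodicPts σ)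
    (h : ∀ y, ∃ i, σ^[i] x = y) : minimalPeriod σ x = Fintype.card α := by
  refine minimalPeriod_le_card.antisymm ?_
  have hpos := minimalPeriod_pos_of_mem_periodicPts hx
  have hsurj : Surjective fun i : Fin (minimalPeriod σ x) => σ^[i] x := fun y => by
    obtain ⟨i, rfl⟩ := h y
    exact ⟨⟨i % minimalPeriod σ x, Nat.mod_lt _ hpos⟩, iterate_mod_minimalPeriod_eq⟩
  simpa using Fintype.card_le_of_surjective _ hsurj

theorem Injective.forall_exists_iterate_lt_card_iff (hσ : Injective σ) (x₀ : α) :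
    (∀ x y, ∃ i < Fintype.card α, σ^[i] x = y) ↔ minimalPeriod σ x₀ = Fintype.card α := by
  refine ⟨fun h => minimalPeriod_eq_card_of_forall_exists_iterate (hσ.mem_periodicPts x₀)
    fun y => (h x₀ y).imp fun _ => And.right, fun h x => ?_⟩
  obtain ⟨j, -, rfl⟩ := exists_iterate_lt_card_eq_of_minimalPeriod_eq_card h x
  rw [← minimalPeriod_apply_iterate (hσ.mem_periodicPts x₀) j] at h
  exact exists_iterate_lt_card_eq_of_minimalPeriod_eq_card h

end Function

namespace Polynomial

open Function

theorem semiconj_intCast_eval (f : ℤ[X]) (R : Type*) [Ring R] :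
    Semiconj (Int.cast : ℤ → R) f.eval fun z => f.eval₂ (Int.castRingHom R) z :=
  fun x => by simp

theorem isPeriodicPt_zero_iff_iterate_modEq (f : ℤ[X]) (n k : ℕ) :
    IsPeriodicPt (fun z : ZMod n => f.eval₂ (Int.castRingHom (ZMod n)) z) k 0 ↔
      f.eval^[k] 0 ≡ 0 [ZMOD n] := by
  rw [← ZMod.intCast_eq_intCast_iff, (semiconj_intCast_eval f (ZMod n)).iterate_right k 0,
    Int.cast_zero]
  rfl

theorem forall_exists_iterate_lt_iff_minimalPeriod_eq (f : ℤ[X]) (n : ℕ) [NeZero n]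
    (hf : Injective fun z : ZMod n => f.eval₂ (Int.castRingHom (ZMod n)) z) :
    (∀ x : ℤ, ∀ y : ZMod n, ∃ i < n, ((f.eval^[i] x : ℤ) : ZMod n) = y) ↔
      minimalPeriod (fun z : ZMod n => f.eval₂ (Int.castRingHom (ZMod n)) z) 0 = n := by
  simp only [(semiconj_intCast_eval f (ZMod n)).iterate_right _ _]
  have hcycle := hf.forall_exists_iterate_lt_card_iff 0
  rw [ZMod.card] at hcycle
  exact ZMod.intCast_surjective.forall.symm.trans hcycle

end Polynomial

theorem stmt_4 (f : Polynomial ℤ) (hf : IsPermPoly f) :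
    IsOneStroke f ↔
      ∀ w : ℕ, 1 ≤ w →
        (fun t => f.eval t)^[2 ^ w] 0 ≡ 0 [ZMOD 2 ^ w] ∧
        ¬ ((fun t => f.eval t)^[2 ^ (w - 1)] 0 ≡ 0 [ZMOD 2 ^ w]) := by
  refine (and_iff_right hf).trans (forall₂_congr fun w hw => ?_)
  obtain ⟨k, rfl⟩ := Nat.exists_eq_add_of_le' hw
  have hmod : ((2 ^ (k + 1) : ℕ) : ℤ) = 2 ^ (k + 1) := by norm_num
  rw [forall_exists_iterate_lt_iff_minimalPeriod_eq f _ (hf _).1,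
    Function.minimalPeriod_eq_prime_pow_succ_iff, isPeriodicPt_zero_iff_iterate_modEq,
    isPeriodicPt_zero_iff_iterate_modEq, hmod, Nat.add_sub_cancel]
end

section
/- Let f(X) be a permutation polynomial over a ring of modulo 2^w. Then f(X) is a one-stroke polynomial over the ring if and only if for every integer w ≥ 1, f^{2^{w-1}}(0) ≡ 2^{w-1} (mod 2^w). -/
open Polynomial

section Aux

set_option linter.unusedSectionVars false

variable {α : Type*} [Fintype α] [DecidableEq α]

lemma aux_cancel {g : α → α} (hg : Function.Injective g) {i j : ℕ} {x : α}
    (hij : i ≤ j) (h : g^[i] x = g^[j] x) : g^[j - i] x = x := by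
  have h2 : g^[i] (g^[j - i] x) = g^[i] x := by
    rw [← Function.iterate_add_apply, Nat.add_sub_cancel' hij, h]
  exact hg.iterate i h2

lemma aux_pigeon (g : α → α) (hg : Function.Injective g) (x : α) :
    ∃ p, 0 < p ∧ p ≤ Fintype.card α ∧ g^[p] x = x := by
  obtain ⟨i, j, hne, hij⟩ := Fintype.exists_ne_map_eq_of_card_lt
    (fun i : Fin (Fintype.card α + 1) => g^[(i : ℕ)] x) (by simp)
  have hne' : (i : ℕ) ≠ (j : ℕ) := fun h => hne (Fin.ext h)
  rcases Nat.lt_or_ge (i : ℕ) (j : ℕ) with h | h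
  · exact ⟨(j : ℕ) - (i : ℕ), by omega, by have := j.isLt; omega,
      aux_cancel hg h.le hij⟩
  · have h' : (j : ℕ) < (i : ℕ) := by omega
    exact ⟨(i : ℕ) - (j : ℕ), by omega, by have := i.isLt; omega,
      aux_cancel hg h'.le hij.symm⟩

lemma aux_no_small (g : α → α) (x : α)
    (horb : ∀ y, ∃ i < Fintype.card α, g^[i] x = y)
    {p : ℕ} (hp : 0 < p) (hplt : p < Fintype.card α) (hper : g^[p] x = x) : False := by
  have hsub : (Finset.univ : Finset α) ⊆ Finset.image (fun j => g^[j] x) (Finset.range p) := by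
    intro y _
    obtain ⟨i, _, hi⟩ := horb y
    refine Finset.mem_image.2 ⟨i % p, Finset.mem_range.2 (Nat.mod_lt _ hp), ?_⟩
    rw [Function.IsPeriodicPt.iterate_mod_apply hper, hi]
  have := Finset.card_le_card hsub
  have h2 := Finset.card_image_le (s := Finset.range p) (f := fun j => g^[j] x)
  simp [Finset.card_range, Finset.card_univ] at this h2
  omega

lemma aux_exact (g : α → α) (hg : Function.Injective g) (x : α)
    (horb : ∀ y, ∃ i < Fintype.card α, g^[i] x = y) :
    g^[Fintype.card α] x = x := by
  obtain ⟨p, hp, hple, hper⟩ := aux_pigeon g hg x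
  rcases eq_or_lt_of_le hple with h | h
  · rwa [← h]
  · exact absurd hper (fun hh => aux_no_small g x horb hp h hh)

lemma aux_all (g : α → α) (x : α) (hN : g^[Fintype.card α] x = x)
    (horb : ∀ y, ∃ i < Fintype.card α, g^[i] x = y) (y z : α) :
    ∃ i < Fintype.card α, g^[i] y = z := by
  set N := Fintype.card α with hNdef
  obtain ⟨j, hj, hy⟩ := horb y
  obtain ⟨k, hk, hz⟩ := horb z
  rcases le_or_gt j k with h | h
  · refine ⟨k - j, by omega, ?_⟩
    rw [← hy, ← Function.iterate_add_apply, Nat.sub_add_cancel h, hz]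
  · refine ⟨k + N - j, by omega, ?_⟩
    rw [← hy, ← Function.iterate_add_apply, show k + N - j + j = k + N by omega,
      Function.iterate_add_apply, hN, hz]

end Aux

namespace OneStrokeAux

variable (f : Polynomial ℤ)

/-- The induced map on `ZMod (2^w)`. -/
def gmap (w : ℕ) : ZMod (2 ^ w) → ZMod (2 ^ w) :=
  fun x => f.eval₂ (Int.castRingHom (ZMod (2 ^ w))) x

lemma gmap_cast (w i : ℕ) (x : ℤ) :
    (((fun t => f.eval t)^[i] x : ℤ) : ZMod (2 ^ w)) = (gmap f w)^[i] ((x : ZMod (2 ^ w))) := by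
  induction i with
  | zero => simp
  | succ n ih =>
      rw [Function.iterate_succ_apply', Function.iterate_succ_apply', ← ih]
      show ((f.eval ((fun t => f.eval t)^[n] x) : ℤ) : ZMod (2 ^ w)) = _
      unfold gmap
      rw [show ((((fun t => f.eval t)^[n] x : ℤ)) : ZMod (2 ^ w))
          = Int.castRingHom (ZMod (2 ^ w)) ((fun t => f.eval t)^[n] x) from rfl,
        Polynomial.eval₂_hom]
      rfl

lemma gmap_bij (hf : IsPermPoly f) (w : ℕ) : Function.Bijective (gmap f w) := hf w

lemma gmap_proj {u w : ℕ} (h : u ≤ w) (i : ℕ) (y : ZMod (2 ^ w)) :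
    ZMod.castHom (pow_dvd_pow 2 h) (ZMod (2 ^ u)) ((gmap f w)^[i] y)
      = (gmap f u)^[i] (ZMod.castHom (pow_dvd_pow 2 h) (ZMod (2 ^ u)) y) := by
  obtain ⟨z, rfl⟩ := ZMod.intCast_surjective (n := 2 ^ w) y
  rw [← gmap_cast, map_intCast, map_intCast, ← gmap_cast]

/-- Orbit of 0 covers everything at level `w`. -/
def Orb (w : ℕ) : Prop := ∀ y : ZMod (2 ^ w), ∃ i < 2 ^ w, (gmap f w)^[i] 0 = y

lemma orb_exact (hf : IsPermPoly f) (w : ℕ) (h : Orb f w) :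
    (gmap f w)^[2 ^ w] 0 = 0 ∧ ∀ p, 0 < p → p < 2 ^ w → (gmap f w)^[p] 0 ≠ 0 := by
  haveI : NeZero (2 ^ w) := ⟨pow_ne_zero w two_ne_zero⟩
  have hcard : Fintype.card (ZMod (2 ^ w)) = 2 ^ w := ZMod.card _
  have horb : ∀ y, ∃ i < Fintype.card (ZMod (2 ^ w)), (gmap f w)^[i] 0 = y := by
    rw [hcard]; exact h
  constructor
  · have := aux_exact (gmap f w) (gmap_bij f hf w).injective 0 horb
    rwa [hcard] at this
  · intro p hp hplt hper
    exact aux_no_small (gmap f w) 0 horb hp (by rwa [hcard]) hper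

lemma pow_ne (w : ℕ) (hw : 1 ≤ w) : ((2 ^ (w - 1) : ℕ) : ZMod (2 ^ w)) ≠ 0 := by
  intro heq
  have hdvd := (ZMod.natCast_eq_zero_iff _ _).mp heq
  have h1 : (2 : ℕ) ^ w ≤ 2 ^ (w - 1) := Nat.le_of_dvd (by positivity) hdvd
  have h2 : (2 : ℕ) ^ (w - 1) < 2 ^ w := Nat.pow_lt_pow_right one_lt_two (by omega)
  omega

lemma kernel_eq {w : ℕ} (hw : 1 ≤ w) (a : ZMod (2 ^ w))
    (h0 : ZMod.castHom (pow_dvd_pow 2 (Nat.sub_le w 1)) (ZMod (2 ^ (w - 1))) a = 0)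
    (hne : a ≠ 0) : a = ((2 ^ (w - 1) : ℕ) : ZMod (2 ^ w)) := by
  haveI : NeZero (2 ^ w) := ⟨pow_ne_zero w two_ne_zero⟩
  set v := a.val with hv
  have hva : ((v : ℕ) : ZMod (2 ^ w)) = a := ZMod.natCast_rightInverse a
  have hvlt : v < 2 ^ w := ZMod.val_lt a
  rw [← hva, map_natCast, ZMod.natCast_eq_zero_iff] at h0
  obtain ⟨c, hc⟩ := h0
  have hm : 0 < 2 ^ (w - 1) := by positivity
  have hvlt2 : v < 2 ^ (w - 1) * 2 := by
    rw [← pow_succ]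
    have : w - 1 + 1 = w := by omega
    rwa [this]
  have hc2 : c < 2 := by
    by_contra hcc
    push_neg at hcc
    have : 2 ^ (w - 1) * 2 ≤ 2 ^ (w - 1) * c := Nat.mul_le_mul_left _ hcc
    omega
  interval_cases c
  · exfalso; apply hne; rw [← hva]; simp [hc]
  · rw [← hva, hc]; norm_num

lemma forward (hf : IsPermPoly f) (horb : ∀ w, Orb f w) (w : ℕ) (hw : 1 ≤ w) :
    (gmap f w)^[2 ^ (w - 1)] 0 = ((2 ^ (w - 1) : ℕ) : ZMod (2 ^ w)) := by
  set a := (gmap f w)^[2 ^ (w - 1)] 0 with ha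
  have hane : a ≠ 0 := by
    apply (orb_exact f hf w (horb w)).2 (2 ^ (w - 1)) (by positivity)
    exact Nat.pow_lt_pow_right one_lt_two (by omega)
  have hproj : ZMod.castHom (pow_dvd_pow 2 (Nat.sub_le w 1)) (ZMod (2 ^ (w - 1))) a = 0 := by
    rw [ha, gmap_proj f (Nat.sub_le w 1), map_zero]
    exact (orb_exact f hf (w - 1) (horb (w - 1))).1
  exact kernel_eq hw a hproj hane

lemma backward (hf : IsPermPoly f)
    (h : ∀ w, 1 ≤ w → (gmap f w)^[2 ^ (w - 1)] 0 = ((2 ^ (w - 1) : ℕ) : ZMod (2 ^ w))) :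
    ∀ w, Orb f w := by
  intro w
  induction w with
  | zero =>
      intro y
      haveI : Subsingleton (ZMod (2 ^ 0)) := by rw [pow_zero]; exact inferInstance
      exact ⟨0, by norm_num, Subsingleton.elim _ _⟩
  | succ w ih =>
      haveI : NeZero (2 ^ (w + 1)) := ⟨pow_ne_zero _ two_ne_zero⟩
      have hm : (gmap f (w + 1))^[2 ^ w] 0 = ((2 ^ w : ℕ) : ZMod (2 ^ (w + 1))) := by
        have := h (w + 1) (by omega)
        simpa using this
      have hmne : (gmap f (w + 1))^[2 ^ w] 0 ≠ 0 := by
        rw [hm]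
        have := pow_ne (w + 1) (by omega)
        simpa using this
      have hdown := orb_exact f hf w ih
      -- any period at level w+1 is a multiple of 2^w
      have hdvd : ∀ p : ℕ, (gmap f (w + 1))^[p] 0 = 0 → 2 ^ w ∣ p := by
        intro p hp
        have hle : w ≤ w + 1 := Nat.le_succ w
        have hproj : (gmap f w)^[p] 0 = 0 := by
          have := gmap_proj f hle p (0 : ZMod (2 ^ (w + 1)))
          rw [map_zero] at this
          rw [← this, hp, map_zero]
        have hmod : (gmap f w)^[p % 2 ^ w] 0 = 0 := by
          rw [Function.IsPeriodicPt.iterate_mod_apply hdown.1, hproj]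
        rcases Nat.eq_zero_or_pos (p % 2 ^ w) with h0 | h0
        · exact Nat.dvd_of_mod_eq_zero h0
        · exact absurd hmod (hdown.2 _ h0 (Nat.mod_lt _ (by positivity)))
      -- some positive period exists
      have hcard : Fintype.card (ZMod (2 ^ (w + 1))) = 2 ^ (w + 1) := ZMod.card _
      obtain ⟨p, hp0, hple, hper⟩ := aux_pigeon (gmap f (w + 1))
        (gmap_bij f hf (w + 1)).injective 0
      rw [hcard] at hple
      have hpdvd := hdvd p hper
      have hpn : p = 2 ^ (w + 1) := by
        obtain ⟨c, hc⟩ := hpdvd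
        have hc2 : c ≤ 2 := by
          by_contra hcc
          push_neg at hcc
          have : 2 ^ w * 3 ≤ 2 ^ w * c := Nat.mul_le_mul_left _ hcc
          have hn : (2 : ℕ) ^ (w + 1) = 2 ^ w * 2 := by rw [pow_succ]
          omega
        interval_cases c
        · omega
        · exfalso; apply hmne; rwa [hc, Nat.mul_one] at hper
        · rw [hc, pow_succ]
      rw [hpn] at hper
      -- injectivity of i ↦ g^[i] 0 on Fin (2^(w+1))
      have hinj : Function.Injective
          (fun i : Fin (2 ^ (w + 1)) => (gmap f (w + 1))^[(i : ℕ)] 0) := by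
        intro i j hij
        by_contra hne
        have hne' : (i : ℕ) ≠ (j : ℕ) := fun hh => hne (Fin.ext hh)
        -- wlog i < j
        have key : ∀ i j : ℕ, i < j → j < 2 ^ (w + 1) →
            (gmap f (w + 1))^[i] 0 = (gmap f (w + 1))^[j] 0 → False := by
          intro i j hlt hjlt heq
          have hz : (gmap f (w + 1))^[j - i] 0 = 0 :=
            aux_cancel (gmap_bij f hf (w + 1)).injective hlt.le heq
          have hd := hdvd _ hz
          obtain ⟨c, hc⟩ := hd
          have hn : (2 : ℕ) ^ (w + 1) = 2 ^ w * 2 := by rw [pow_succ]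
          have hc1 : c = 1 := by
            rcases Nat.lt_or_ge c 2 with hcl | hcl
            · interval_cases c
              · omega
              · rfl
            · exfalso
              have : 2 ^ w * 2 ≤ 2 ^ w * c := Nat.mul_le_mul_left _ hcl
              omega
          rw [hc1, Nat.mul_one] at hc
          apply hmne
          rw [← hc]
          exact hz
        rcases Nat.lt_or_ge (i : ℕ) (j : ℕ) with hlt | hge
        · exact key _ _ hlt j.isLt hij
        · exact key _ _ (by omega) i.isLt hij.symm
      have hsurj : Function.Surjective
          (fun i : Fin (2 ^ (w + 1)) => (gmap f (w + 1))^[(i : ℕ)] 0) := by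
        have hcards : Fintype.card (Fin (2 ^ (w + 1))) = Fintype.card (ZMod (2 ^ (w + 1))) := by
          rw [hcard, Fintype.card_fin]
        exact (Fintype.bijective_iff_injective_and_card _).2 ⟨hinj, hcards⟩ |>.surjective
      intro y
      obtain ⟨i, hi⟩ := hsurj y
      exact ⟨(i : ℕ), i.isLt, hi⟩

end OneStrokeAux

open OneStrokeAux in
theorem stmt_5 (f : Polynomial ℤ) (hf : IsPermPoly f) :
    IsOneStroke f ↔
      ∀ w : ℕ, 1 ≤ w →
        (fun t => f.eval t)^[2 ^ (w - 1)] 0 ≡ 2 ^ (w - 1) [ZMOD 2 ^ w] := by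
  have hmodeq : ∀ w : ℕ,
      ((fun t => f.eval t)^[2 ^ (w - 1)] 0 ≡ 2 ^ (w - 1) [ZMOD 2 ^ w]) ↔
      (gmap f w)^[2 ^ (w - 1)] 0 = ((2 ^ (w - 1) : ℕ) : ZMod (2 ^ w)) := by
    intro w
    rw [show ((2 : ℤ) ^ w) = ((2 ^ w : ℕ) : ℤ) by push_cast; ring,
      ← ZMod.intCast_eq_intCast_iff]
    rw [gmap_cast f w (2 ^ (w - 1)) 0]
    push_cast
    simp
  constructor
  · rintro ⟨-, hone⟩ w hw
    have horb : ∀ w', Orb f w' := by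
      intro w'
      rcases Nat.eq_zero_or_pos w' with h0 | h0
      · subst h0
        haveI : Subsingleton (ZMod (2 ^ 0)) := by rw [pow_zero]; exact inferInstance
        intro y; exact ⟨0, by norm_num, Subsingleton.elim _ _⟩
      · intro y
        obtain ⟨i, hi, hiy⟩ := hone w' h0 0 y
        refine ⟨i, hi, ?_⟩
        rw [← hiy, gmap_cast f w' i 0]
        simp
    rw [hmodeq w]
    exact forward f hf horb w hw
  · intro h
    have horb : ∀ w, Orb f w := by
      apply backward f hf
      intro w hw
      rw [← hmodeq w]
      exact h w hw
    refine ⟨hf, ?_⟩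
    intro w hw x y
    haveI : NeZero (2 ^ w) := ⟨pow_ne_zero w two_ne_zero⟩
    have hcard : Fintype.card (ZMod (2 ^ w)) = 2 ^ w := ZMod.card _
    have hN : (gmap f w)^[2 ^ w] 0 = 0 := (orb_exact f hf w (horb w)).1
    have horb' : ∀ z, ∃ i < Fintype.card (ZMod (2 ^ w)), (gmap f w)^[i] 0 = z := by
      rw [hcard]; exact horb w
    obtain ⟨i, hi, hiy⟩ := aux_all (gmap f w) 0 (by rwa [hcard]) horb' (x : ZMod (2 ^ w)) y
    rw [hcard] at hi
    refine ⟨i, hi, ?_⟩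
    rw [gmap_cast f w i x, hiy]
end

section
/- Assume that f(X) is a permutation polynomial over a ring of modulo 2^w and that f satisfies f^2(0) ≡ 2 (mod 4) and f^4(0) ≡ 4 (mod 8). Then for every integer w ≥ 2, f^{2^{w-1}}(0) ≡ 2^{w-1} (mod 2^w). -/
open Polynomial

/-!
Write `F` for `t ↦ f(t)`. Bijectivity mod 4 forces `f'` to be odd, so for every iterate the
displacement `F^[m] x - x` mod `2^(u+1)` depends only on `x` mod `2^u`. As `F 0` is odd (by `h2`)
and iterates commute with `F`, a congruence for `F^[m] 0` that only needs parity spreads to every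
`x`; this gives `F^[2] x ≡ x + 2 (mod 4)` and then, from `h4`, `F^[4] x ≡ x + 4 (mod 8)`.
After that one doubles: for `G = F^[2^v]`, `G (G x) - x` is `(G x - x) + (G (x + 2^v) - (x + 2^v))`
mod `2^(v+2)`, and `G (x + 2^v) ≡ G x + 2^v` there, because the derivative of `G` is a product of
values of `f'` that is `≡ 1 (mod 4)`: `f'` mod 4 depends only on parity and `F^[2]` keeps parity.
-/

/-- `2`-adically, `φ - id` is `1/2`-Lipschitz on points at even distance; for a polynomial map
this says that its derivative is odd everywhere. -/
def HasOddSlope (φ : ℤ → ℤ) : Prop :=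
  ∀ ⦃u : ℕ⦄, 0 < u → ∀ ⦃x y : ℤ⦄, x ≡ y [ZMOD 2 ^ u] →
    φ x - x ≡ φ y - y [ZMOD 2 ^ (u + 1)]

namespace HasOddSlope

variable {φ ψ F G : ℤ → ℤ}

theorem modEq (hφ : HasOddSlope φ) {u : ℕ} (hu : 0 < u) {x y : ℤ} (h : x ≡ y [ZMOD 2 ^ u]) :
    φ x ≡ φ y [ZMOD 2 ^ u] := by
  simpa using ((hφ hu h).of_dvd (pow_dvd_pow 2 u.le_succ)).add h

theorem comp (hψ : HasOddSlope ψ) (hφ : HasOddSlope φ) : HasOddSlope (ψ ∘ φ) := by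
  intro u hu x y h
  simpa using (hψ hu (hφ.modEq hu h)).add (hφ hu h)

theorem iterate (hφ : HasOddSlope φ) : ∀ n, HasOddSlope φ^[n]
  | 0 => fun _ _ _ _ _ => by simp [Int.ModEq]
  | n + 1 => (hφ.iterate n).comp hφ

theorem sub_modEq_of_commute (hF : HasOddSlope F) (hc : Function.Commute F φ) {u : ℕ}
    (hu : 0 < u) {x : ℤ} (h : φ x ≡ x [ZMOD 2 ^ u]) :
    φ (F x) - F x ≡ φ x - x [ZMOD 2 ^ (u + 1)] := by
  have := (hF hu h).add_right (φ x - F x)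
  rw [hc x] at this
  convert this using 1 <;> ring

theorem apply_apply_sub_modEq (hG : HasOddSlope G) {v : ℕ} {x : ℤ}
    (hx : G x ≡ x + 2 ^ v [ZMOD 2 ^ (v + 1)]) :
    G (G x) - x ≡ (G x - x) + (G (x + 2 ^ v) - (x + 2 ^ v)) [ZMOD 2 ^ (v + 2)] := by
  convert (hG v.succ_pos hx).add_right (G x - x) using 1 <;> ring

end HasOddSlope

def HasDerivModSq (φ d : ℤ → ℤ) : Prop :=
  ∀ x h : ℤ, ∃ s, φ (x + h) = φ x + h * d x + h ^ 2 * s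

theorem hasDerivModSq_id : HasDerivModSq id 1 := fun _ _ => ⟨0, by simp⟩

namespace HasDerivModSq

variable {φ ψ dφ dψ : ℤ → ℤ}

theorem comp (hψ : HasDerivModSq ψ dψ) (hφ : HasDerivModSq φ dφ) :
    HasDerivModSq (ψ ∘ φ) (fun x => dφ x * dψ (φ x)) := by
  intro x h
  obtain ⟨s, hs⟩ := hφ x h
  obtain ⟨s', hs'⟩ := hψ (φ x) (h * dφ x + h ^ 2 * s)
  refine ⟨s * dψ (φ x) + (dφ x + h * s) ^ 2 * s', ?_⟩
  simp only [Function.comp_apply, hs, add_assoc, hs']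
  ring

theorem hasOddSlope (hφ : HasDerivModSq φ dφ) (hd : ∀ x, Odd (dφ x)) : HasOddSlope φ := by
  intro u hu x y h
  obtain ⟨k, rfl⟩ : ∃ k, u = k + 1 := ⟨u - 1, by omega⟩
  obtain ⟨t, ht⟩ := h.symm.dvd
  obtain ⟨s, hs⟩ := hφ y (2 ^ (k + 1) * t)
  obtain ⟨a, ha⟩ := hd y
  rw [show x = y + 2 ^ (k + 1) * t by omega, hs, ha]
  exact Int.modEq_iff_dvd.2 ⟨-(a * t + 2 ^ k * t ^ 2 * s), by ring⟩

end HasDerivModSq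

def HasSlopeOneModFour (φ : ℤ → ℤ) : Prop :=
  ∃ d, HasDerivModSq φ d ∧ ∀ x, d x ≡ 1 [ZMOD 4]

namespace HasSlopeOneModFour

variable {φ ψ : ℤ → ℤ}

theorem comp (hψ : HasSlopeOneModFour ψ) (hφ : HasSlopeOneModFour φ) :
    HasSlopeOneModFour (ψ ∘ φ) :=
  let ⟨_, hψ, hdψ⟩ := hψ
  let ⟨_, hφ, hdφ⟩ := hφ
  ⟨_, hψ.comp hφ, fun x => by simpa using (hdφ x).mul (hdψ (φ x))⟩

theorem iterate (hφ : HasSlopeOneModFour φ) : ∀ n, HasSlopeOneModFour φ^[n]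
  | 0 => ⟨1, hasDerivModSq_id, fun _ => rfl⟩
  | n + 1 => (hφ.iterate n).comp hφ

theorem add_two_pow_modEq (hφ : HasSlopeOneModFour φ) (x : ℤ) {v : ℕ} (hv : 2 ≤ v) :
    φ (x + 2 ^ v) ≡ φ x + 2 ^ v [ZMOD 2 ^ (v + 2)] := by
  obtain ⟨d, hd, hd1⟩ := hφ
  obtain ⟨k, rfl⟩ := Nat.exists_eq_add_of_le' hv
  obtain ⟨s, hs⟩ := hd x (2 ^ (k + 2))
  obtain ⟨c, hc⟩ := (hd1 x).dvd
  rw [hs]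
  exact Int.modEq_iff_dvd.2 ⟨c - 2 ^ k * s, by linear_combination (2:ℤ) ^ (k + 2) * hc⟩

end HasSlopeOneModFour

theorem hasDerivModSq_eval (f : ℤ[X]) :
    HasDerivModSq (fun t => f.eval t) (fun t => f.derivative.eval t) := by
  intro x h
  obtain ⟨s, hs⟩ := f.binomExpansion x h
  exact ⟨s, by beta_reduce; rw [hs]; ring⟩

theorem two_dvd_eval_derivative_derivative (f : ℤ[X]) (x : ℤ) :
    2 ∣ f.derivative.derivative.eval x := by
  have h : derivative (derivative f) = 2 • hasseDeriv 2 f := by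
    simpa using (congrFun (factorial_smul_hasseDeriv (R := ℤ) (k := 2)) f).symm
  exact ⟨(hasseDeriv 2 f).eval x, by simp [h]⟩

theorem eval_derivative_modEq_four (f : ℤ[X]) {x y : ℤ} (h : x ≡ y [ZMOD 2]) :
    f.derivative.eval x ≡ f.derivative.eval y [ZMOD 4] := by
  obtain ⟨t, ht⟩ := h.symm.dvd
  obtain ⟨s, hs⟩ := hasDerivModSq_eval f.derivative y (2 * t)
  obtain ⟨e, he⟩ := two_dvd_eval_derivative_derivative f y
  beta_reduce at hs
  rw [show x = y + 2 * t by omega, hs, he]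
  exact Int.modEq_iff_dvd.2 ⟨-(t * e + t ^ 2 * s), by ring⟩

namespace IsPermPoly

variable {f : ℤ[X]}

theorem modEq_of_eval_modEq (hf : IsPermPoly f) (n : ℕ) {x y : ℤ}
    (h : f.eval x ≡ f.eval y [ZMOD 2 ^ n]) : x ≡ y [ZMOD 2 ^ n] := by
  have key := (hf n).injective (a₁ := (x : ZMod (2 ^ n))) (a₂ := y)
  simp only [eval₂_at_intCast, eq_intCast, ZMod.intCast_eq_intCast_iff] at key
  exact_mod_cast key (by exact_mod_cast h)

theorem odd_eval_derivative (hf : IsPermPoly f) (x : ℤ) : Odd (f.derivative.eval x) := by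
  by_contra hev
  obtain ⟨a, ha⟩ := Int.not_odd_iff_even.1 hev
  obtain ⟨s, hs⟩ := hasDerivModSq_eval f x 2
  beta_reduce at hs
  have : x + 2 ≡ x [ZMOD 2 ^ 2] :=
    hf.modEq_of_eval_modEq 2 (Int.modEq_iff_dvd.2 ⟨-(a + s), by rw [hs, ha]; ring⟩)
  unfold Int.ModEq at this
  omega

theorem hasOddSlope (hf : IsPermPoly f) : HasOddSlope (fun t => f.eval t) :=
  (hasDerivModSq_eval f).hasOddSlope hf.odd_eval_derivative

end IsPermPoly

theorem hasSlopeOneModFour_iterate_four {F d : ℤ → ℤ} (hF : HasDerivModSq F d)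
    (hd : ∀ x, Odd (d x)) (hd4 : ∀ x y, x ≡ y [ZMOD 2] → d x ≡ d y [ZMOD 4])
    (hF2 : ∀ x, F^[2] x ≡ x [ZMOD 2]) : HasSlopeOneModFour F^[4] := by
  have hFF := hF.comp hF
  refine ⟨_, hFF.comp hFF, fun x => ?_⟩
  have hper : d (F (F x)) * d (F (F (F x))) ≡ d x * d (F x) [ZMOD 4] :=
    (hd4 _ _ (hF2 x)).mul (hd4 _ _ (hF2 (F x)))
  refine (hper.mul_left _).trans ?_
  rw [← sq]
  exact Int.sq_mod_four_eq_one_of_odd ((hd x).mul (hd (F x)))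

namespace HasOddSlope

variable {F G : ℤ → ℤ}

theorem odd_apply_zero (hF : HasOddSlope F) (h2 : F^[2] 0 ≡ 2 [ZMOD 4]) : Odd (F 0) := by
  by_contra hev
  obtain ⟨k, hk⟩ := Int.not_odd_iff_even.1 hev
  have h : F (F 0) - F 0 ≡ F 0 - 0 [ZMOD 4] :=
    hF one_pos (Int.modEq_iff_dvd.2 ⟨-k, by rw [hk]; ring⟩ : F 0 ≡ 0 [ZMOD 2 ^ 1])
  change F (F 0) ≡ 2 [ZMOD 4] at h2
  unfold Int.ModEq at *
  omega

theorem iterate_modEq_of_parity (hF : HasOddSlope F) (hF0 : Odd (F 0)) {m u : ℕ} (hu : 0 < u)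
    (hpar : ∀ x y, x ≡ y [ZMOD 2] → F^[m] x - x ≡ F^[m] y - y [ZMOD 2 ^ (u + 1)])
    (h0 : F^[m] 0 ≡ 2 ^ u [ZMOD 2 ^ (u + 1)]) (x : ℤ) :
    F^[m] x ≡ x + 2 ^ u [ZMOD 2 ^ (u + 1)] := by
  have hcomm : F^[m] (F 0) - F 0 ≡ F^[m] 0 - 0 [ZMOD 2 ^ (u + 1)] :=
    hF.sub_modEq_of_commute (Function.Commute.self_iterate F m) hu
      ((h0.of_dvd (pow_dvd_pow 2 u.le_succ)).trans (by simp [Int.ModEq]))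
  have hx : F^[m] x - x ≡ F^[m] 0 - 0 [ZMOD 2 ^ (u + 1)] := by
    rcases Int.even_or_odd x with hx | hx
    · exact hpar x 0 (by simpa [Int.ModEq] using Int.even_iff.1 hx)
    · exact (hpar x (F 0) ((Int.odd_iff.1 hx).trans (Int.odd_iff.1 hF0).symm)).trans hcomm
  simpa [add_comm] using (hx.trans (by simpa using h0)).add_right x

theorem iterate_two_modEq (hF : HasOddSlope F) (h2 : F^[2] 0 ≡ 2 [ZMOD 4]) (x : ℤ) :
    F^[2] x ≡ x + 2 [ZMOD 4] :=
  hF.iterate_modEq_of_parity (hF.odd_apply_zero h2) (u := 1) one_pos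
    (fun _ _ h => hF.iterate 2 one_pos h) h2 x

theorem iterate_four_sub_modEq (hF : HasOddSlope F) (h2 : ∀ x, F^[2] x ≡ x + 2 [ZMOD 4])
    {x y : ℤ} (h : x ≡ y [ZMOD 2]) : F^[4] x - x ≡ F^[4] y - y [ZMOD 8] := by
  have hsum : ∀ z, F^[4] z - z ≡ (F^[2] z - z) + (F^[2] (z + 2) - (z + 2)) [ZMOD 8] :=
    fun z => (hF.iterate 2).apply_apply_sub_modEq (v := 1) (h2 z)
  have hper : ∀ {a b}, a ≡ b [ZMOD 4] → F^[2] a - a ≡ F^[2] b - b [ZMOD 8] :=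
    fun h => hF.iterate 2 two_pos h
  refine (hsum x).trans (Int.ModEq.trans ?_ (hsum y).symm)
  have hxy : x ≡ y [ZMOD 4] ∨ x ≡ y + 2 [ZMOD 4] := by unfold Int.ModEq at *; omega
  rcases hxy with h4 | h4
  · exact (hper h4).add (hper (h4.add_right 2))
  · rw [add_comm (F^[2] y - y)]
    exact (hper h4).add (hper (by unfold Int.ModEq at *; omega))

theorem iterate_four_modEq (hF : HasOddSlope F) (h2 : F^[2] 0 ≡ 2 [ZMOD 4])
    (h4 : F^[4] 0 ≡ 4 [ZMOD 8]) (x : ℤ) : F^[4] x ≡ x + 4 [ZMOD 8] :=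
  hF.iterate_modEq_of_parity (hF.odd_apply_zero h2) (u := 2) two_pos
    (fun _ _ => hF.iterate_four_sub_modEq (hF.iterate_two_modEq h2)) h4 x

theorem apply_apply_modEq (hG : HasOddSlope G) (hG' : HasSlopeOneModFour G) {v : ℕ} (hv : 2 ≤ v)
    {x : ℤ} (hx : G x ≡ x + 2 ^ v [ZMOD 2 ^ (v + 1)]) :
    G (G x) ≡ x + 2 ^ (v + 1) [ZMOD 2 ^ (v + 2)] := by
  have hdouble : 2 * (G x - x) ≡ 2 * 2 ^ v [ZMOD 2 ^ (v + 2)] := by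
    simpa [pow_succ, mul_comm] using (hx.sub_right x).mul_left' (c := 2)
  calc G (G x) = (G (G x) - x) + x := by ring
    _ ≡ ((G x - x) + (G (x + 2 ^ v) - (x + 2 ^ v))) + x [ZMOD 2 ^ (v + 2)] :=
        (hG.apply_apply_sub_modEq hx).add_right x
    _ ≡ ((G x - x) + (G x + 2 ^ v - (x + 2 ^ v))) + x [ZMOD 2 ^ (v + 2)] :=
        (((hG'.add_two_pow_modEq x hv).sub_right _).add_left _).add_right x
    _ = 2 * (G x - x) + x := by ring
    _ ≡ 2 * 2 ^ v + x [ZMOD 2 ^ (v + 2)] := hdouble.add_right x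
    _ = x + 2 ^ (v + 1) := by ring

theorem iterate_two_pow_modEq (hF : HasOddSlope F) (hF4 : HasSlopeOneModFour F^[4])
    (h4 : ∀ x, F^[4] x ≡ x + 4 [ZMOD 8]) :
    ∀ v, 2 ≤ v → ∀ x, F^[2 ^ v] x ≡ x + 2 ^ v [ZMOD 2 ^ (v + 1)] := by
  refine Nat.le_induction h4 fun v hv ih x => ?_
  have hG : HasSlopeOneModFour F^[2 ^ v] := by
    obtain ⟨k, rfl⟩ := Nat.exists_eq_add_of_le' hv
    rw [pow_add, mul_comm, Function.iterate_mul]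
    exact hF4.iterate _
  rw [pow_succ (2 : ℕ) v, Function.iterate_mul]
  exact (hF.iterate _).apply_apply_modEq hG hv (ih x)

end HasOddSlope

theorem stmt_6 (f : Polynomial ℤ) (hf : IsPermPoly f)
    (h2 : (fun t => f.eval t)^[2] 0 ≡ 2 [ZMOD 4])
    (h4 : (fun t => f.eval t)^[4] 0 ≡ 4 [ZMOD 8]) :
    ∀ w : ℕ, 2 ≤ w →
      (fun t => f.eval t)^[2 ^ (w - 1)] 0 ≡ 2 ^ (w - 1) [ZMOD 2 ^ w] := by
  have hslope := hf.hasOddSlope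
  have hF2 : ∀ x, (fun t => f.eval t)^[2] x ≡ x [ZMOD 2] := fun x =>
    ((hslope.iterate_two_modEq h2 x).of_dvd (by norm_num)).trans (by simp [Int.ModEq])
  have hF4 : HasSlopeOneModFour (fun t => f.eval t)^[4] :=
    hasSlopeOneModFour_iterate_four (hasDerivModSq_eval f) hf.odd_eval_derivative
      (fun _ _ => eval_derivative_modEq_four f) hF2
  intro w hw
  obtain rfl | hw := hw.eq_or_lt
  · exact hslope.iterate_two_modEq h2 0
  obtain ⟨v, rfl⟩ : ∃ v, w = v + 1 := ⟨w - 1, by omega⟩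
  simpa using hslope.iterate_two_pow_modEq hF4 (hslope.iterate_four_modEq h2 h4) v (by omega) 0
end

section
/- The polynomial F(X) = 4X^3 + X + 1 is a one-stroke polynomial over a ring of modulo 2^w; that is, for every w ≥ 1 and every X̄ ∈ ℤ/2^wℤ, the orbit {F^i(X̄) mod 2^w : i = 0, 1, …, 2^w − 1} equals all of ℤ/2^wℤ. -/
open Polynomial

namespace OneStrokeAux

def Ff : ℤ → ℤ := fun t => 4 * t ^ 3 + t + 1

lemma Ff_eval : (fun t : ℤ => (4 * X ^ 3 + X + 1 : Polynomial ℤ).eval t) = Ff := by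
  funext t; simp [Ff]

lemma lemL (k : ℕ) (c : ℤ) (hc : (2:ℤ) ^ k ∣ c) (a b : ℤ)
    (hab : a ≡ b + c [ZMOD (2:ℤ) ^ (k + 2)]) :
    Ff a ≡ Ff b + c [ZMOD (2:ℤ) ^ (k + 2)] := by
  obtain ⟨s, hs⟩ := Int.ModEq.dvd hab
  have h2 : (2:ℤ) ^ k ∣ a - b := by
    have h3 : a - b = c - (2:ℤ) ^ (k + 2) * s := by linarith
    rw [h3]
    exact dvd_sub hc ((pow_dvd_pow 2 (by omega)).mul_right s)
  obtain ⟨t, ht⟩ := h2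
  refine Int.modEq_iff_dvd.mpr ⟨s - t * (a ^ 2 + a * b + b ^ 2), ?_⟩
  simp only [Ff]
  linear_combination hs - 4 * (a ^ 2 + a * b + b ^ 2) * ht

lemma lemLn (k : ℕ) (c : ℤ) (hc : (2:ℤ) ^ k ∣ c) (n : ℕ) :
    ∀ a b : ℤ, a ≡ b + c [ZMOD (2:ℤ) ^ (k + 2)] →
      Ff^[n] a ≡ Ff^[n] b + c [ZMOD (2:ℤ) ^ (k + 2)] := by
  induction n with
  | zero => intro a b h; simpa using h
  | succ n ih =>
    intro a b h
    rw [Function.iterate_succ_apply, Function.iterate_succ_apply]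
    exact ih _ _ (lemL k c hc a b h)

lemma lemQ (w : ℕ) : ∀ x : ℤ, Ff^[2 ^ w] x ≡ x + 2 ^ w [ZMOD (2:ℤ) ^ (w + 1)] := by
  induction w with
  | zero =>
    intro x
    refine Int.modEq_iff_dvd.mpr ⟨-(2 * x ^ 3), ?_⟩
    simp [Ff]; ring
  | succ w ih =>
    intro x
    obtain ⟨m, hm⟩ := Int.ModEq.dvd (ih x)
    -- hm : (x + 2^w) - Ff^[2^w] x = 2^(w+1) * m
    set c : ℤ := 2 ^ w - 2 ^ (w + 1) * m with hcdef
    have hc : (2:ℤ) ^ w ∣ c := by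
      refine dvd_sub dvd_rfl ?_
      exact (pow_dvd_pow 2 (by omega)).mul_right m
    have ha : Ff^[2 ^ w] x = x + c := by rw [hcdef]; linarith
    have key := lemLn w c hc (2 ^ w) (Ff^[2 ^ w] x) x (by rw [ha])
    have hsplit : Ff^[2 ^ (w + 1)] x = Ff^[2 ^ w] (Ff^[2 ^ w] x) := by
      rw [← Function.iterate_add_apply]
      congr 1
      rw [pow_succ]; omega
    rw [hsplit]
    refine key.trans ?_
    rw [ha]
    refine Int.modEq_iff_dvd.mpr ⟨m, ?_⟩
    rw [hcdef]; ring

lemma lemR (v : ℕ) : ∀ u : ℕ, ∀ z : ℤ,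
    Ff^[2 ^ v * u] z ≡ z + 2 ^ v * (u : ℤ) [ZMOD (2:ℤ) ^ (v + 1)] := by
  intro u
  induction u with
  | zero => intro z; simp
  | succ u ih =>
    intro z
    have hsplit : Ff^[2 ^ v * (u + 1)] z = Ff^[2 ^ v] (Ff^[2 ^ v * u] z) := by
      rw [← Function.iterate_add_apply]
      congr 1
      ring
    rw [hsplit]
    have h1 := lemQ v (Ff^[2 ^ v * u] z)
    refine h1.trans ?_
    have h2 := (ih z).add_right ((2:ℤ) ^ v)
    refine h2.trans ?_
    refine Int.ModEq.refl _ |>.trans (by push_cast; ring_nf; exact Int.ModEq.refl _)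

lemma not_return (w : ℕ) (d : ℕ) (hd : 0 < d) (hdw : d < 2 ^ w) (z : ℤ)
    (h : Ff^[d] z ≡ z [ZMOD (2:ℤ) ^ w]) : False := by
  obtain ⟨v, u, hu2, hdu⟩ := Nat.exists_eq_pow_mul_and_not_dvd (show d ≠ 0 by omega) 2 (by norm_num)
  have hu1 : 1 ≤ u := Nat.one_le_iff_ne_zero.mpr (by rintro rfl; simp at hdu; omega)
  have hvw : v + 1 ≤ w := by
    by_contra hcon
    have : 2 ^ w ≤ 2 ^ v := Nat.pow_le_pow_right (by norm_num) (by omega)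
    have : 2 ^ v ≤ d := by
      calc 2 ^ v ≤ 2 ^ v * u := Nat.le_mul_of_pos_right _ hu1
        _ = d := hdu.symm
    omega
  have hR := lemR v u z
  rw [← hdu] at hR
  have h' : Ff^[d] z ≡ z [ZMOD (2:ℤ) ^ (v + 1)] :=
    h.of_dvd (pow_dvd_pow 2 hvw)
  have h3 : z + 2 ^ v * (u : ℤ) ≡ z [ZMOD (2:ℤ) ^ (v + 1)] := hR.symm.trans h'
  obtain ⟨s, hs⟩ := Int.ModEq.dvd h3
  -- hs : z - (z + 2^v * u) = 2^(v+1) * s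
  have : (u : ℤ) = -2 * s := by
    have h4 : (2:ℤ) ^ v * (u : ℤ) = 2 ^ v * (-2 * s) := by
      rw [pow_succ] at hs; linarith
    exact mul_left_cancel₀ (by positivity) h4
  have : (2:ℤ) ∣ (u : ℤ) := ⟨-s, by omega⟩
  have : (2:ℕ) ∣ u := by exact_mod_cast Int.ofNat_dvd.mp (by exact_mod_cast this)
  exact hu2 this

end OneStrokeAux

namespace OneStrokeAux

lemma Ff_surj_mod (w : ℕ) (Y : ℤ) : ∃ t : ℤ, Ff t ≡ Y [ZMOD (2:ℤ) ^ w] := by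
  refine ⟨Ff^[2 ^ w - 1] Y, ?_⟩
  have h1 : Ff (Ff^[2 ^ w - 1] Y) = Ff^[2 ^ w] Y := by
    rw [← Function.iterate_succ_apply' Ff (2 ^ w - 1) Y]
    congr 1
    have : 1 ≤ 2 ^ w := Nat.one_le_two_pow
    omega
  rw [h1]
  have h2 := (lemQ w Y).of_dvd (pow_dvd_pow 2 (by omega : w ≤ w + 1))
  exact h2.trans (Int.modEq_iff_dvd.mpr ⟨-1, by ring⟩)

end OneStrokeAux


open OneStrokeAux in
theorem stmt_9 : IsOneStroke (4 * X ^ 3 + X + 1 : Polynomial ℤ) := by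
  have hcastmod : ∀ w : ℕ, (((2:ℕ) ^ w : ℕ) : ℤ) = (2:ℤ) ^ w := by intro w; push_cast; ring
  constructor
  · intro w
    haveI : NeZero (2 ^ w) := ⟨by positivity⟩
    have hfun : (fun x : ZMod (2 ^ w) =>
        (4 * X ^ 3 + X + 1 : Polynomial ℤ).eval₂ (Int.castRingHom (ZMod (2 ^ w))) x)
        = fun x : ZMod (2 ^ w) => 4 * x ^ 3 + x + 1 := by
      funext x; simp
    rw [hfun]
    have hsurj : Function.Surjective (fun x : ZMod (2 ^ w) => 4 * x ^ 3 + x + 1) := by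
      intro y
      obtain ⟨Y, rfl⟩ := ZMod.intCast_surjective y
      obtain ⟨t, ht⟩ := Ff_surj_mod w Y
      refine ⟨(t : ZMod (2 ^ w)), ?_⟩
      show 4 * (t : ZMod (2 ^ w)) ^ 3 + (t : ZMod (2 ^ w)) + 1 = ((Y : ℤ) : ZMod (2 ^ w))
      have h1 : (4 * (t : ZMod (2 ^ w)) ^ 3 + (t : ZMod (2 ^ w)) + 1)
          = ((Ff t : ℤ) : ZMod (2 ^ w)) := by
        push_cast [Ff]; ring
      rw [h1, ZMod.intCast_eq_intCast_iff, hcastmod]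
      exact ht
    exact ⟨Finite.injective_iff_surjective.mpr hsurj, hsurj⟩
  · intro w hw x y
    haveI : NeZero (2 ^ w) := ⟨by positivity⟩
    set g : Fin (2 ^ w) → ZMod (2 ^ w) := fun i => ((Ff^[i.val] x : ℤ) : ZMod (2 ^ w)) with hg
    have key : ∀ i j : Fin (2 ^ w), i < j → g i ≠ g j := by
      intro i j hlt heq
      have hmod : Ff^[i.val] x ≡ Ff^[j.val] x [ZMOD (2:ℤ) ^ w] := by
        rw [← hcastmod, ← ZMod.intCast_eq_intCast_iff]
        exact heq
      have hsplit : Ff^[j.val] x = Ff^[j.val - i.val] (Ff^[i.val] x) := by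
        rw [← Function.iterate_add_apply]
        congr 1
        omega
      refine not_return w (j.val - i.val) (by omega) (by have := j.isLt; omega)
        (Ff^[i.val] x) ?_
      rw [← hsplit]
      exact hmod.symm
    have hginj : Function.Injective g := by
      intro i j hij
      rcases lt_trichotomy i j with h | h | h
      · exact absurd hij (key i j h)
      · exact h
      · exact absurd hij.symm (key j i h)
    have hgbij : Function.Bijective g :=
      (Fintype.bijective_iff_injective_and_card g).mpr ⟨hginj, by simp [ZMod.card]⟩
    obtain ⟨i, hi⟩ := hgbij.2 y
    refine ⟨i.val, i.isLt, ?_⟩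
    rw [show (fun t => Polynomial.eval t (4 * X ^ 3 + X + 1 : Polynomial ℤ)) = Ff from Ff_eval]
    exact hi
end

section
/- The polynomial G(X) = 6X^3 + 2X^2 + X + 1 is a permutation polynomial over a ring of modulo 2^w (its induced map on ℤ/2^wℤ is a bijection for every w ≥ 0), but it is not a one-stroke polynomial over the ring; in particular there is no X̄ ∈ ℤ/2^3ℤ whose orbit {G^i(X̄) mod 2^3 : i = 0, 1, …, 2^3 − 1} equals all of ℤ/2^3ℤ. -/
open Polynomial

/-!
`G(x) - G(y) = (x - y) (1 + 2 (3 (x² + xy + y²) + x + y))`, and the second factor is a unit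
modulo `2^w`, so `G` is injective, hence bijective, on `ℤ/2^wℤ`. Modulo `8`, however, every
point of `ℤ/8ℤ` is periodic of period `4` under `G` (`G` acts as the two 4-cycles
`0 → 1 → 2 → 3 → 0` and `4 → 5 → 6 → 7 → 4`), so no orbit covers the 8 residues.
-/

open Function

lemma isNilpotent_two_zmod_two_pow (w : ℕ) : IsNilpotent (2 : ZMod (2 ^ w)) :=
  ⟨w, by exact_mod_cast ZMod.natCast_self (2 ^ w)⟩

lemma injective_of_isNilpotent_two {R : Type*} [CommRing R] (h2 : IsNilpotent (2 : R)) :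
    Injective (fun x : R => 6 * x ^ 3 + 2 * x ^ 2 + x + 1) := by
  intro x y hxy
  have hunit : IsUnit (1 + 2 * (3 * (x ^ 2 + x * y + y ^ 2) + (x + y))) :=
    ((Commute.all _ _).isNilpotent_mul_right h2).isUnit_one_add
  have hfactor : (x - y) * (1 + 2 * (3 * (x ^ 2 + x * y + y ^ 2) + (x + y))) = 0 := by
    linear_combination hxy
  exact sub_eq_zero.mp (hunit.mul_left_eq_zero.mp hfactor)

lemma card_le_of_isPeriodicPt_of_forall_exists_iterate {α : Type*} [Fintype α] {f : α → α}
    {x : α} {n : ℕ} (hn : 0 < n) (hx : IsPeriodicPt f n x) (horbit : ∀ y, ∃ i, f^[i] x = y) :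
    Fintype.card α ≤ n := by
  have hsurj : Surjective (fun i : Fin n => f^[i] x) := by
    intro y
    obtain ⟨i, rfl⟩ := horbit y
    exact ⟨⟨i % n, Nat.mod_lt i hn⟩, hx.iterate_mod_apply i⟩
  simpa using Fintype.card_le_of_surjective _ hsurj

lemma iterate_intCast_eval {R : Type*} [CommRing R] (f : ℤ[X]) (i : ℕ) (x : ℤ) :
    (((fun t => f.eval t)^[i] x : ℤ) : R) = (fun t => f.eval₂ (Int.castRingHom R) t)^[i] x :=
  (Semiconj.iterate_right (fun t => (eval₂_hom (Int.castRingHom R) t).symm) i).eq x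

lemma isPeriodicPt_four_mod_eight (x : ZMod (2 ^ 3)) :
    IsPeriodicPt (fun t : ZMod (2 ^ 3) => 6 * t ^ 3 + 2 * t ^ 2 + t + 1) 4 x := by
  revert x
  unfold IsPeriodicPt IsFixedPt
  decide

theorem stmt_10 :
    IsPermPoly (6 * X ^ 3 + 2 * X ^ 2 + X + 1 : Polynomial ℤ) ∧
    ¬ IsOneStroke (6 * X ^ 3 + 2 * X ^ 2 + X + 1 : Polynomial ℤ) ∧
    ¬ ∃ x : ℤ, ∀ y : ZMod (2 ^ 3),
        ∃ i < 2 ^ 3,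
          (((fun t => (6 * X ^ 3 + 2 * X ^ 2 + X + 1 : Polynomial ℤ).eval t)^[i] x : ℤ) :
              ZMod (2 ^ 3)) = y := by
  have hperm : IsPermPoly (6 * X ^ 3 + 2 * X ^ 2 + X + 1 : Polynomial ℤ) := fun w => by
    rw [← Finite.injective_iff_bijective]
    simpa using injective_of_isNilpotent_two (isNilpotent_two_zmod_two_pow w)
  have hno_orbit : ¬ ∃ x : ℤ, ∀ y : ZMod (2 ^ 3),
      ∃ i < 2 ^ 3,
        (((fun t => (6 * X ^ 3 + 2 * X ^ 2 + X + 1 : Polynomial ℤ).eval t)^[i] x : ℤ) :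
            ZMod (2 ^ 3)) = y := by
    rintro ⟨x, hx⟩
    have hcard := card_le_of_isPeriodicPt_of_forall_exists_iterate four_pos
      (isPeriodicPt_four_mod_eight x) fun y => by
        obtain ⟨i, -, hi⟩ := hx y
        rw [iterate_intCast_eval] at hi
        exact ⟨i, by simpa using hi⟩
    simp at hcard
  exact ⟨hperm, fun h => hno_orbit ⟨0, h.2 3 (by norm_num) 0⟩, hno_orbit⟩
end

section
/- Let w ≥ 3 be an integer and let g(X) = Σ_i d_i X^i be a polynomial with integer coefficients satisfying d_0 ≡ 2^{w-1} (mod 2^w) and d_1 ≡ 1 (mod 4). Then the composition g(g(X)) has constant term congruent to 2^w modulo 2^{w+1} and linear coefficient congruent to 1 modulo 4. -/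
open Polynomial

theorem stmt_12 (w : ℕ) (hw : 3 ≤ w) (g : Polynomial ℤ)
    (h0 : g.coeff 0 ≡ 2 ^ (w - 1) [ZMOD 2 ^ w]) (h1 : g.coeff 1 ≡ 1 [ZMOD 4]) :
    (g.comp g).coeff 0 ≡ 2 ^ w [ZMOD 2 ^ (w + 1)] ∧ (g.comp g).coeff 1 ≡ 1 [ZMOD 4] := by
  obtain ⟨m, rfl⟩ : ∃ m, w = m + 3 := ⟨w - 3, by omega⟩
  simp only [show m + 3 - 1 = m + 2 from rfl] at h0
  set d0 : ℤ := g.coeff 0 with hd0def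
  set d1 : ℤ := g.coeff 1 with hd1def
  obtain ⟨k, hk⟩ := h0.dvd
  have hd0 : d0 = 2 ^ (m + 2) * (1 - 2 * k) := by
    linear_combination -hk
  obtain ⟨t, ht⟩ := h1.dvd
  have hd1 : d1 = 1 - 4 * t := by linarith
  have h4 : (4:ℤ) ∣ d0 := ⟨2 ^ m * (1 - 2 * k), by rw [hd0]; ring⟩
  -- constant term
  have hc : (g.comp g).coeff 0 = g.divX.eval d0 * d0 + d0 := by
    rw [coeff_zero_eq_eval_zero, eval_comp, ← coeff_zero_eq_eval_zero, ← hd0def]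
    conv_lhs => rw [← g.divX_mul_X_add]
    simp [← hd0def]
  obtain ⟨s, hs⟩ : d0 ∣ g.divX.eval d0 - d1 := by
    have := Polynomial.sub_dvd_eval_sub d0 0 g.divX
    simpa [← coeff_zero_eq_eval_zero, coeff_divX, ← hd1def] using this
  have he : g.divX.eval d0 = d1 + d0 * s := by linarith
  constructor
  · rw [Int.modEq_iff_dvd]
    refine ⟨-(2 ^ m * (1 - 2 * k) * (1 - 2 * k) * s - k - t + 2 * k * t), ?_⟩
    rw [hc, he, hd1, hd0]; ring
  · -- linear coefficient
    have hl : (g.comp g).coeff 1 = d1 * (derivative g).eval d0 := by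
      have h1' : ∀ p : ℤ[X], p.coeff 1 = (derivative p).eval 0 := by
        intro p
        rw [← coeff_zero_eq_eval_zero, coeff_derivative]
        ring
      rw [h1' (g.comp g), derivative_comp, eval_mul, eval_comp, ← h1' g,
        ← coeff_zero_eq_eval_zero, ← hd0def, ← hd1def]
    have hD : (derivative g).eval d0 ≡ d1 [ZMOD 4] := by
      rw [Int.modEq_iff_dvd]
      have h := Polynomial.sub_dvd_eval_sub d0 0 (derivative g)
      rw [sub_zero] at h
      have h2 : d0 ∣ d1 - (derivative g).eval d0 := by
        have : (derivative g).eval 0 = d1 := by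
          rw [← coeff_zero_eq_eval_zero, coeff_derivative]; push_cast; rw [← hd1def]; ring
        rw [← this]
        rw [← neg_sub]; exact dvd_neg.mpr h
      exact dvd_trans h4 h2
    have : (g.comp g).coeff 1 ≡ 1 * 1 [ZMOD 4] := by
      rw [hl]; exact Int.ModEq.mul h1 (hD.trans h1)
    simpa using this
end

section
/- Let f(X) be a one-stroke polynomial over a ring of modulo 2^w, let w ≥ 1, let X̄ be an integer, and let j = Σ_{i=0}^{w-1} ε(i)·2^i with each ε(i) ∈ {0,1}. If f^j(X̄) ≡ 0 (mod 2^w), then for every m with 0 ≤ m ≤ w−1, f^{j_m}(X̄) ≡ 0 (mod 2^{m+1}), where j_m := Σ_{i=0}^{m} ε(i)·2^i. -/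
open Polynomial

lemma iterate_cast_aux (f : Polynomial ℤ) (n : ℕ) (x : ℤ) (k : ℕ) :
    (((fun t => f.eval t)^[k] x : ℤ) : ZMod n) =
      (fun y : ZMod n => f.eval₂ (Int.castRingHom (ZMod n)) y)^[k] (x : ZMod n) := by
  induction k with
  | zero => simp
  | succ k ih =>
    rw [Function.iterate_succ_apply', Function.iterate_succ_apply', ← ih]
    exact (Polynomial.eval₂_at_apply (Int.castRingHom (ZMod n)) _).symm

lemma cycle_per {N : ℕ} [NeZero N] (g : ZMod N → ZMod N) (hginj : Function.Injective g)
    (z : ZMod N) (hsurj : ∀ y : ZMod N, ∃ i < N, g^[i] z = y) : g^[N] z = z := by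
  have hN : 0 < N := Nat.pos_of_ne_zero (NeZero.ne N)
  set F : Fin N → ZMod N := fun i => g^[i.1] z with hF
  have hFsurj : Function.Surjective F := by
    intro y
    obtain ⟨i, hi, hix⟩ := hsurj y
    exact ⟨⟨i, hi⟩, hix⟩
  have hbij : Function.Bijective F := by
    rw [Fintype.bijective_iff_surjective_and_card]
    exact ⟨hFsurj, by simp [ZMod.card]⟩
  obtain ⟨i, hi⟩ := hFsurj (g^[N] z)
  rcases Nat.eq_zero_or_pos i.1 with h0 | hpos
  · have : F i = F ⟨0, hN⟩ := by simp [hF, h0]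
    rw [← hi, this]; simp [hF]
  · exfalso
    have e1 : g^[N] z = g (g^[N - 1] z) := by
      rw [show g^[N] = g^[(N - 1) + 1] from congrArg _ (by omega), Function.iterate_succ_apply']
    have e2 : g^[i.1] z = g (g^[i.1 - 1] z) := by
      rw [show g^[i.1] = g^[(i.1 - 1) + 1] from congrArg _ (by omega), Function.iterate_succ_apply']
    have h1 : g (g^[N - 1] z) = g (g^[i.1 - 1] z) := by
      rw [← e1, ← e2]; exact hi.symm
    have h2 : g^[N - 1] z = g^[i.1 - 1] z := hginj h1
    have h3 : (⟨N - 1, Nat.sub_lt hN one_pos⟩ : Fin N)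
        = ⟨i.1 - 1, lt_of_le_of_lt (Nat.sub_le _ _) i.2⟩ := hbij.1 h2
    have h4 : N - 1 = i.1 - 1 := by simpa using congrArg Fin.val h3
    have h5 := i.2
    omega

lemma period_aux (f : Polynomial ℤ) (hf : IsOneStroke f) (w : ℕ) (hw : 1 ≤ w) (x : ℤ) :
    (fun y : ZMod (2 ^ w) => f.eval₂ (Int.castRingHom (ZMod (2 ^ w))) y)^[2 ^ w]
      (x : ZMod (2 ^ w)) = (x : ZMod (2 ^ w)) := by
  haveI : NeZero (2 ^ w) := ⟨pow_ne_zero w two_ne_zero⟩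
  refine cycle_per _ (hf.1 w).1 _ ?_
  intro y
  obtain ⟨i, hi, hix⟩ := hf.2 w hw x y
  exact ⟨i, hi, by rw [← iterate_cast_aux]; exact hix⟩

theorem stmt_16 (f : Polynomial ℤ) (hf : IsOneStroke f) (w : ℕ) (hw : 1 ≤ w)
    (x : ℤ) (ε : ℕ → ℕ) (hε : ∀ i, ε i ≤ 1)
    (j : ℕ) (hj : j = ∑ i ∈ Finset.range w, ε i * 2 ^ i)
    (h : (fun t => f.eval t)^[j] x ≡ 0 [ZMOD 2 ^ w]) :
    ∀ m : ℕ, m ≤ w - 1 →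
      (fun t => f.eval t)^[∑ i ∈ Finset.range (m + 1), ε i * 2 ^ i] x ≡ 0 [ZMOD 2 ^ (m + 1)] := by
  intro m hm
  have hmw : m + 1 ≤ w := by omega
  set jm := ∑ i ∈ Finset.range (m + 1), ε i * 2 ^ i with hjm
  have hsplit : ∃ r : ℕ, j = jm + 2 ^ (m + 1) * r := by
    have hsum : jm + ∑ i ∈ Finset.Ico (m + 1) w, ε i * 2 ^ i = j := by
      rw [hj, hjm]
      simp only [Finset.range_eq_Ico]
      exact Finset.sum_Ico_consecutive _ (Nat.zero_le _) hmw
    have hdvd : 2 ^ (m + 1) ∣ ∑ i ∈ Finset.Ico (m + 1) w, ε i * 2 ^ i := by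
      refine Finset.dvd_sum fun i hi => Dvd.dvd.mul_left ?_ _
      exact pow_dvd_pow 2 (Finset.mem_Ico.mp hi).1
    obtain ⟨r, hr⟩ := hdvd
    exact ⟨r, by omega⟩
  obtain ⟨r, hr⟩ := hsplit
  haveI : NeZero (2 ^ (m + 1)) := ⟨pow_ne_zero _ two_ne_zero⟩
  have h' : (fun t => f.eval t)^[j] x ≡ 0 [ZMOD 2 ^ (m + 1)] :=
    Int.ModEq.of_dvd (pow_dvd_pow 2 hmw) h
  have hdvd' : ((2 : ℤ) ^ (m + 1)) ∣ (fun t => f.eval t)^[j] x :=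
    (Int.modEq_zero_iff_dvd).mp h'
  have hcast : (((fun t => f.eval t)^[j] x : ℤ) : ZMod (2 ^ (m + 1))) = 0 := by
    rw [ZMod.intCast_zmod_eq_zero_iff_dvd]
    exact_mod_cast hdvd'
  set g := fun y : ZMod (2 ^ (m + 1)) => f.eval₂ (Int.castRingHom (ZMod (2 ^ (m + 1)))) y with hg
  have key : (((fun t => f.eval t)^[jm] x : ℤ) : ZMod (2 ^ (m + 1))) = 0 := by
    rw [iterate_cast_aux]
    have hper : g^[2 ^ (m + 1)] (x : ZMod (2 ^ (m + 1))) = (x : ZMod (2 ^ (m + 1))) :=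
      period_aux f hf (m + 1) (Nat.le_add_left 1 m) x
    have hfix : g^[2 ^ (m + 1) * r] (x : ZMod (2 ^ (m + 1))) = (x : ZMod (2 ^ (m + 1))) := by
      rw [Function.iterate_mul]
      exact Function.iterate_fixed hper r
    have hjjm : g^[j] (x : ZMod (2 ^ (m + 1))) = g^[jm] (x : ZMod (2 ^ (m + 1))) := by
      rw [hr, Function.iterate_add_apply, hfix]
    rw [← hjjm, ← iterate_cast_aux]
    exact hcast
  rw [Int.modEq_zero_iff_dvd]
  have := (ZMod.intCast_zmod_eq_zero_iff_dvd _ (2 ^ (m + 1))).mp key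
  exact_mod_cast this
end
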